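/- arXiv:math/0505314 — 5 statements merged into one kernel-verified Lean document; each statement's English description precedes it below -/
import Mathlib

section
/- Let X be a topological space, let C be a Noetherian topological space, let c₁, c₂ : C → X be continuous maps, and let Z ⊆ X be a closed subset. Then Z is locally c-invariant if and only if for every irreducible component S of the subspace c₂⁻¹(Z) \ c₁⁻¹(Z) of C, the closure of c₁(S) in X and the closure of c₂(S) in X are disjoint. -/
/-- For a correspondence `c₁, c₂ : C → X` with `C` Noetherian and a closed
subset `Z ⊆ X`, `Z` is locally c-invariant iff for every irreducible component `S` of the
subspace `c₂⁻¹(Z) \ c₁⁻¹(Z)`, the closures of `c₁(S)` and `c₂(S)` in `X` are disjoint. -/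
theorem stmt1 {C X : Type*} [TopologicalSpace C] [TopologicalSpace X]
    [TopologicalSpace.NoetherianSpace C]
    (c₁ c₂ : C → X) (hc₁ : Continuous c₁) (hc₂ : Continuous c₂)
    (Z : Set X) (hZ : IsClosed Z) :
    (∀ x ∈ Z, ∃ U : Set X, IsOpen U ∧ x ∈ U ∧
        c₁ '' (c₂ ⁻¹' (Z ∩ U)) ⊆ Z ∪ Uᶜ) ↔
    (∀ S ∈ irreducibleComponents (↥(c₂ ⁻¹' Z \ c₁ ⁻¹' Z)),
        Disjoint (closure (c₁ '' (Subtype.val '' S)))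
          (closure (c₂ '' (Subtype.val '' S)))) := by
  set W : Set C := c₂ ⁻¹' Z \ c₁ ⁻¹' Z with hW
  constructor
  · -- locally invariant → disjoint closures
    intro h S hS
    refine Set.disjoint_left.mpr fun x hx1 hx2 => ?_
    have hxZ : x ∈ Z := by
      refine hZ.closure_subset_iff.mpr ?_ hx2
      rintro y ⟨c, ⟨d, hdS, rfl⟩, rfl⟩
      exact d.2.1
    obtain ⟨U, hUopen, hxU, hU⟩ := h x hxZ
    -- S is irreducible in the subtype
    have hirr : IsIrreducible S := hS.1
    have h1 : (S ∩ ((fun t : W => c₁ t.1) ⁻¹' U)).Nonempty := by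
      obtain ⟨y, hyU, c, ⟨d, hdS, rfl⟩, rfl⟩ :=
        mem_closure_iff.mp hx1 U hUopen hxU
      exact ⟨d, hdS, hyU⟩
    have h2 : (S ∩ ((fun t : W => c₂ t.1) ⁻¹' U)).Nonempty := by
      obtain ⟨y, hyU, c, ⟨d, hdS, rfl⟩, rfl⟩ :=
        mem_closure_iff.mp hx2 U hUopen hxU
      exact ⟨d, hdS, hyU⟩
    obtain ⟨t, _, ht1, ht2⟩ := hirr.2 _ _
      (hUopen.preimage (hc₁.comp continuous_subtype_val))
      (hUopen.preimage (hc₂.comp continuous_subtype_val)) h1 h2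
    have := hU ⟨t.1, ⟨t.2.1, ht2⟩, rfl⟩
    rcases this with hZ' | hU'
    · exact t.2.2 hZ'
    · exact hU' ht1
  · -- disjoint closures → locally invariant
    intro h x hxZ
    have hfin : (irreducibleComponents W).Finite :=
      TopologicalSpace.NoetherianSpace.finite_irreducibleComponents
    set A : Set (↥W) → Set X := fun S => closure (c₁ '' (Subtype.val '' S)) with hA
    set B : Set (↥W) → Set X := fun S => closure (c₂ '' (Subtype.val '' S)) with hB
    classical
    set F : Set X := ⋃ S ∈ irreducibleComponents (↥W),
      (if x ∈ A S then B S else A S) with hF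
    have hFclosed : IsClosed F := by
      refine Set.Finite.isClosed_biUnion hfin fun S _ => ?_
      split <;> exact isClosed_closure
    refine ⟨Fᶜ, hFclosed.isOpen_compl, ?_, ?_⟩
    · simp only [hF, Set.mem_compl_iff, Set.mem_iUnion, not_exists]
      rintro S hS
      intro hxmem
      by_cases hxA : x ∈ A S
      · rw [if_pos hxA] at hxmem
        exact Set.disjoint_left.mp (h S hS) hxA hxmem
      · rw [if_neg hxA] at hxmem
        exact hxA hxmem
    · rintro y ⟨c, ⟨hcZ, hcU⟩, rfl⟩
      by_cases hc1Z : c₁ c ∈ Z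
      · exact Or.inl hc1Z
      · refine Or.inr ?_
        set t : ↥W := ⟨c, hcZ, hc1Z⟩ with ht
        set S := irreducibleComponent t with hSdef
        have hSmem : S ∈ irreducibleComponents (↥W) :=
          irreducibleComponent_mem_irreducibleComponents t
        have htS : t ∈ S := mem_irreducibleComponent
        have hc1A : c₁ c ∈ A S := subset_closure ⟨c, ⟨t, htS, rfl⟩, rfl⟩
        have hc2B : c₂ c ∈ B S := subset_closure ⟨c, ⟨t, htS, rfl⟩, rfl⟩
        by_cases hxA : x ∈ A S
        · -- then c₂ c ∈ B S ⊆ F, contradicting hcU : c₂ c ∈ Fᶜ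
          exact absurd (Set.mem_biUnion hSmem (by rw [if_pos hxA]; exact hc2B)) hcU
        · -- then c₁ c ∈ A S ⊆ F
          simp only [Set.not_notMem, Set.mem_compl_iff, not_not]
          exact Set.mem_biUnion hSmem (by rw [if_neg hxA]; exact hc1A)
end

section
/- Let X be a topological space, let C be a Noetherian topological space, let c₁, c₂ : C → X be continuous maps, and let Z ⊆ X be a closed subset which is locally c-invariant. Then Z is c-invariant in a neighborhood of fixed points: there exists an open subset W ⊆ C containing the equalizer set {y ∈ C : c₁(y) = c₂(y)} such that W ∩ c₂⁻¹(Z) ⊆ c₁⁻¹(Z) (i.e. c₁(W ∩ c₂⁻¹(Z)) ⊆ Z). -/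
/-- For a correspondence `c₁, c₂ : C → X` with `C` Noetherian and a closed,
locally c-invariant subset `Z ⊆ X`, `Z` is c-invariant in a neighborhood of fixed points:
there is an open `W ⊆ C` containing the equalizer `{y | c₁ y = c₂ y}` with
`W ∩ c₂⁻¹(Z) ⊆ c₁⁻¹(Z)`. -/
theorem stmt2 {C X : Type*} [TopologicalSpace C] [TopologicalSpace X]
    [TopologicalSpace.NoetherianSpace C]
    (c₁ c₂ : C → X) (hc₁ : Continuous c₁) (hc₂ : Continuous c₂)
    (Z : Set X) (hZ : IsClosed Z)
    (hloc : ∀ x ∈ Z, ∃ U : Set X, IsOpen U ∧ x ∈ U ∧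
        c₁ '' (c₂ ⁻¹' (Z ∩ U)) ⊆ Z ∪ Uᶜ) :
    ∃ W : Set C, IsOpen W ∧ {y | c₁ y = c₂ y} ⊆ W ∧
      W ∩ c₂ ⁻¹' Z ⊆ c₁ ⁻¹' Z := by
  refine ⟨⋃₀ {V : Set C | IsOpen V ∧ V ∩ c₂ ⁻¹' Z ⊆ c₁ ⁻¹' Z}, ?_, ?_, ?_⟩
  · exact isOpen_sUnion fun V hV => hV.1
  · intro y hy
    by_cases hyZ : c₂ y ∈ Z
    · obtain ⟨U, hU, hxU, hinv⟩ := hloc (c₂ y) hyZ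
      refine ⟨c₁ ⁻¹' U ∩ c₂ ⁻¹' U, ⟨(hU.preimage hc₁).inter (hU.preimage hc₂), ?_⟩, ⟨show c₁ y ∈ U from (show c₁ y = c₂ y from hy) ▸ hxU, hxU⟩⟩
      · rintro z ⟨⟨hz1, hz2⟩, hzZ⟩
        have := hinv ⟨z, ⟨hzZ, hz2⟩, rfl⟩
        rcases this with h | h
        · exact h
        · exact absurd hz1 h
    · refine ⟨c₂ ⁻¹' Zᶜ, ⟨hZ.isOpen_compl.preimage hc₂, ?_⟩, hyZ⟩
      rintro z ⟨hz1, hz2⟩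
      exact absurd hz2 hz1
  · rintro y ⟨⟨V, ⟨_, hV⟩, hyV⟩, hyZ⟩
    exact hV ⟨hyV, hyZ⟩
end

section
/- Let k be a field, let X and C be schemes of finite type over k, and let c₁, c₂ : C → X be k-morphisms such that every fiber of the underlying continuous map of c₂ is a finite set (c₂ is quasi-finite). Then for every closed point x of X, the closed set {x} is locally c-invariant: there is an open subset U ⊆ X containing x such that c₁(c₂⁻¹({x} ∩ U)) ⊆ {x} ∪ (X \ U); in fact U := X \ (c₁(c₂⁻¹(x)) \ {x}) is such an open subset. -/
/-!
Schemes locally of finite type over a field are Jacobson, so the finite closed fibre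
`c₂⁻¹(x)` consists of closed points, and morphisms locally of finite type between Jacobson
schemes send closed points to closed points. Hence `c₁(c₂⁻¹(x)) \ {x}` is a finite set of closed
points, thus closed, and its complement is the required neighbourhood of `x`.
-/

open AlgebraicGeometry CategoryTheory

section closedPoints

variable {X : Type*} [TopologicalSpace X] {s : Set X}

lemma Set.Finite.isClosed_of_subset_closedPoints (hs : s.Finite) (h : s ⊆ closedPoints X) :
    IsClosed s := by
  rw [← s.biUnion_of_singleton]
  exact hs.isClosed_biUnion h

lemma Set.Finite.subset_closedPoints_of_isClosed [JacobsonSpace X] (hs : s.Finite)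
    (hs' : IsClosed s) : s ⊆ closedPoints X := by
  have h := closure_inter_closedPoints hs'
  rw [((hs.subset Set.inter_subset_left).isClosed_of_subset_closedPoints
    Set.inter_subset_right).closure_eq] at h
  exact h ▸ Set.inter_subset_right

end closedPoints

theorem stmt3_general (k : Type*) [Field k] (X C : Scheme)
    (πX : X ⟶ Spec (CommRingCat.of k)) (πC : C ⟶ Spec (CommRingCat.of k))
    [LocallyOfFiniteType πX]
    [LocallyOfFiniteType πC]
    (c₁ c₂ : C ⟶ X) (hc₁ : c₁ ≫ πX = πC)
    (hqf : ∀ x : X, (c₂.base ⁻¹' {x}).Finite)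
    (x : X) (hx : IsClosed ({x} : Set X)) :
    IsOpen ((c₁.base '' (c₂.base ⁻¹' {x}) \ {x})ᶜ) ∧
    x ∈ (c₁.base '' (c₂.base ⁻¹' {x}) \ {x})ᶜ ∧
    c₁.base '' (c₂.base ⁻¹' ({x} ∩ (c₁.base '' (c₂.base ⁻¹' {x}) \ {x})ᶜ)) ⊆
      {x} ∪ ((c₁.base '' (c₂.base ⁻¹' {x}) \ {x})ᶜ)ᶜ := by
  have : JacobsonSpace X := LocallyOfFiniteType.jacobsonSpace πX
  have : JacobsonSpace C := LocallyOfFiniteType.jacobsonSpace πC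
  have : LocallyOfFiniteType (c₁ ≫ πX) := hc₁ ▸ ‹LocallyOfFiniteType πC›
  have : LocallyOfFiniteType c₁ := locallyOfFiniteType_of_comp c₁ πX
  have hfibre : c₂.base ⁻¹' {x} ⊆ closedPoints C :=
    (hqf x).subset_closedPoints_of_isClosed (hx.preimage c₂.continuous)
  have hS : IsClosed (c₁.base '' (c₂.base ⁻¹' {x}) \ {x}) :=
    ((hqf x).image _).sdiff.isClosed_of_subset_closedPoints <| Set.sdiff_subset.trans <|
      Set.image_subset_iff.mpr <| hfibre.trans c₁.closePoints_subset_preimage_closedPoints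
  refine ⟨hS.isOpen_compl, fun h ↦ h.2 rfl, ?_⟩
  rw [compl_compl, Set.union_sdiff_self]
  exact (Set.image_mono (Set.preimage_mono Set.inter_subset_left)).trans Set.subset_union_right

/-- For a correspondence `c₁, c₂ : C → X` of schemes of finite type over a
field `k` with `c₂` quasi-finite (finite fibers), every closed point `x` of `X` is locally
c-invariant; in fact `U := X \ (c₁(c₂⁻¹(x)) \ {x})` is the required open neighborhood. -/
theorem stmt3 (k : Type*) [Field k] (X C : Scheme)
    (πX : X ⟶ Spec (CommRingCat.of k)) (πC : C ⟶ Spec (CommRingCat.of k))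
    [LocallyOfFiniteType πX] [QuasiCompact πX]
    [LocallyOfFiniteType πC] [QuasiCompact πC]
    (c₁ c₂ : C ⟶ X) (hc₁ : c₁ ≫ πX = πC) (hc₂ : c₂ ≫ πX = πC)
    (hqf : ∀ x : X, (c₂.base ⁻¹' {x}).Finite)
    (x : X) (hx : IsClosed ({x} : Set X)) :
    IsOpen ((c₁.base '' (c₂.base ⁻¹' {x}) \ {x})ᶜ) ∧
    x ∈ (c₁.base '' (c₂.base ⁻¹' {x}) \ {x})ᶜ ∧
    c₁.base '' (c₂.base ⁻¹' ({x} ∩ (c₁.base '' (c₂.base ⁻¹' {x}) \ {x})ᶜ)) ⊆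
      {x} ∪ ((c₁.base '' (c₂.base ⁻¹' {x}) \ {x})ᶜ)ᶜ :=
  stmt3_general k X C πX πC c₁ c₂ hc₁ hqf x hx
end

section
/- Let A and B be commutative rings, let φ₁, φ₂ : A → B be ring homomorphisms, and let I ⊆ A be a finitely generated ideal such that B·φ₁(I) ⊆ B·φ₂(I) and such that there exists n ≥ 1 with (B·φ₁(I))ⁿ ⊆ (B·φ₂(I))ⁿ⁺¹ (i.e. the correspondence is contracting near the closed subscheme V(I)). Let J ⊆ B be the ideal generated by all elements φ₁(a) − φ₂(a) for a ∈ A, let Fix := V(J) ⊆ Spec B be the fixed-point locus, and let c′ : Fix → Spec A be the map p ↦ φ₂⁻¹(p). Then for every connected subset β ⊆ Fix such that c′(β) ∩ V(I) ≠ ∅, one has c′(β) ⊆ V(I). -/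
/-- For an affine correspondence `φ₁, φ₂ : A → B` that is contracting near
`V(I)` (for a finitely generated ideal `I`), every connected subset `β` of the fixed-point
locus `Fix = V(J)` whose image under `c′ : p ↦ φ₂⁻¹(p)` meets `V(I)` satisfies
`c′(β) ⊆ V(I)`. -/
theorem stmt6 {A B : Type*} [CommRing A] [CommRing B]
    (φ₁ φ₂ : A →+* B) (I : Ideal A) (hIfg : I.FG)
    (hstab : I.map φ₁ ≤ I.map φ₂)
    (hcontr : ∃ n : ℕ, 1 ≤ n ∧ (I.map φ₁) ^ n ≤ (I.map φ₂) ^ (n + 1))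
    (β : Set (PrimeSpectrum B))
    (hβFix : β ⊆ PrimeSpectrum.zeroLocus
      ((Ideal.span {b : B | ∃ a : A, b = φ₁ a - φ₂ a} : Ideal B) : Set B))
    (hβconn : IsConnected β)
    (hmeet : (PrimeSpectrum.comap φ₂ '' β ∩
      PrimeSpectrum.zeroLocus (I : Set A)).Nonempty) :
    PrimeSpectrum.comap φ₂ '' β ⊆ PrimeSpectrum.zeroLocus (I : Set A) := by
  obtain ⟨n, hn1, hcontr⟩ := hcontr
  set J : Ideal B := Ideal.span {b : B | ∃ a : A, b = φ₁ a - φ₂ a} with hJ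
  set mk : B →+* B ⧸ J := Ideal.Quotient.mk J with hmk
  set ψ : A →+* B ⧸ J := mk.comp φ₂ with hψ
  -- mk ∘ φ₁ = mk ∘ φ₂
  have hφeq : mk.comp φ₁ = ψ := by
    ext a
    simp only [RingHom.comp_apply, hψ]
    exact Ideal.Quotient.eq.mpr (Ideal.subset_span ⟨a, rfl⟩)
  set L : Ideal (B ⧸ J) := I.map ψ with hL
  have hmap2 : ∀ m : ℕ, ((I.map φ₂) ^ m).map mk = L ^ m := by
    intro m
    rw [Ideal.map_pow, Ideal.map_map]
  have hmap1 : ∀ m : ℕ, ((I.map φ₁) ^ m).map mk = L ^ m := by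
    intro m
    rw [Ideal.map_pow, Ideal.map_map, hφeq]
  -- L^n ≤ L^(n+1)
  have hLn : L ^ n ≤ L ^ (n + 1) := by
    rw [← hmap1 n, ← hmap2 (n + 1)]
    exact Ideal.map_mono hcontr
  -- L^n ≤ L^(n+k) for all k
  have hLnk : ∀ k : ℕ, L ^ n ≤ L ^ (n + k) := by
    intro k
    induction k with
    | zero => simp
    | succ k ih =>
      refine ih.trans ?_
      calc L ^ (n + k) = L ^ k * L ^ n := by rw [← pow_add, add_comm]
        _ ≤ L ^ k * L ^ (n + 1) := Ideal.mul_mono_right hLn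
        _ = L ^ (n + (k + 1)) := by rw [← pow_add]; ring_nf
  -- K := L^n is fg and idempotent
  have hKfg : (L ^ n).FG := Submodule.FG.pow (hIfg.map ψ) n
  have hKidem : IsIdempotentElem (L ^ n) := by
    refine le_antisymm ?_ ?_
    · exact Ideal.mul_le_right
    · calc L ^ n ≤ L ^ (n + n) := hLnk n
        _ = L ^ n * L ^ n := pow_add L n n
  obtain ⟨e', he'idem, he'span⟩ := (Ideal.isIdempotentElem_iff_of_fg _ hKfg).mp hKidem
  obtain ⟨e, rfl⟩ := Ideal.Quotient.mk_surjective e'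
  -- key ideal identity in B : span{e} ⊔ J = (I.map φ₂)^n ⊔ J
  have hmapeq : (Ideal.span {e} : Ideal B).map mk = ((I.map φ₂) ^ n).map mk := by
    rw [Ideal.map_span, Set.image_singleton, hmap2 n, he'span, Ideal.submodule_span_eq]
  have hcomap : (Ideal.span {e} : Ideal B) ⊔ J = (I.map φ₂) ^ n ⊔ J := by
    have h1 := Ideal.comap_map_of_surjective mk Ideal.Quotient.mk_surjective
      (Ideal.span {e} : Ideal B)
    have h2 := Ideal.comap_map_of_surjective mk Ideal.Quotient.mk_surjective
      ((I.map φ₂) ^ n)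
    rw [hmapeq] at h1
    rw [← RingHom.ker_eq_comap_bot, Ideal.mk_ker] at h1 h2
    exact h1.symm.trans h2
  -- e(1-e) ∈ J
  have heJ : e * (1 - e) ∈ J := by
    have h0 : mk (e * (1 - e)) = 0 := by
      have h := he'idem.eq
      rw [map_mul, map_sub, map_one, mul_sub, mul_one, h, sub_self]
    exact (Ideal.Quotient.eq_zero_iff_mem).mp h0
  -- for any p ∈ β : J ≤ p
  have hJle : ∀ p ∈ β, J ≤ p.asIdeal := fun p hp =>
    (PrimeSpectrum.mem_zeroLocus _ _).mp (hβFix hp)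
  -- if e ∈ p and p ∈ β then φ₂ a ∈ p for all a ∈ I
  have hkey : ∀ p ∈ β, e ∈ p.asIdeal → ∀ a ∈ I, φ₂ a ∈ p.asIdeal := by
    intro p hp he a ha
    have hpow : (φ₂ a) ^ n ∈ (I.map φ₂) ^ n :=
      Ideal.pow_mem_pow (Ideal.mem_map_of_mem φ₂ ha) n
    have hle : (I.map φ₂) ^ n ⊔ J ≤ p.asIdeal := by
      rw [← hcomap]
      exact sup_le ((Ideal.span_singleton_le_iff_mem _).mpr he) (hJle p hp)
    exact p.isPrime.mem_of_pow_mem n (hle (Ideal.mem_sup_left hpow))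
  -- the meeting point q₀ ∈ β has e ∈ q₀
  obtain ⟨x, ⟨q₀, hq₀β, rfl⟩, hxI⟩ := hmeet
  have hIq₀ : I.map φ₂ ≤ q₀.asIdeal := by
    rw [Ideal.map_le_iff_le_comap]
    exact (PrimeSpectrum.mem_zeroLocus _ _).mp hxI
  have heq₀ : e ∈ q₀.asIdeal := by
    have : e ∈ (Ideal.span {e} : Ideal B) ⊔ J :=
      Ideal.mem_sup_left (Ideal.mem_span_singleton_self e)
    rw [hcomap] at this
    refine sup_le ((Ideal.pow_le_self (by omega)).trans hIq₀) (hJle q₀ hq₀β) this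
  -- connectedness: every p ∈ β has e ∈ p
  have hall : ∀ p ∈ β, e ∈ p.asIdeal := by
    by_contra hcon
    push_neg at hcon
    obtain ⟨p₁, hp₁β, hp₁e⟩ := hcon
    set u : Set (PrimeSpectrum B) := (PrimeSpectrum.zeroLocus {1 - e})ᶜ
    set v : Set (PrimeSpectrum B) := (PrimeSpectrum.zeroLocus {e})ᶜ
    have hu : IsOpen u := (PrimeSpectrum.isClosed_zeroLocus _).isOpen_compl
    have hv : IsOpen v := (PrimeSpectrum.isClosed_zeroLocus _).isOpen_compl
    have hcover : β ⊆ u ∪ v := by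
      intro p hp
      by_contra h
      simp only [u, v, Set.mem_union, Set.mem_compl_iff, PrimeSpectrum.mem_zeroLocus,
        Set.singleton_subset_iff, not_or, not_not] at h
      exact p.isPrime.ne_top (Ideal.eq_top_of_isUnit_mem _
        (by simpa using p.asIdeal.add_mem h.1 h.2) (by simp))
    have hβu : (β ∩ u).Nonempty := by
      refine ⟨q₀, hq₀β, ?_⟩
      simp only [u, Set.mem_compl_iff, PrimeSpectrum.mem_zeroLocus,
        Set.singleton_subset_iff]
      intro h1e
      exact q₀.isPrime.ne_top (Ideal.eq_top_of_isUnit_mem _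
        (by simpa using q₀.asIdeal.add_mem heq₀ h1e) (by simp))
    have hβv : (β ∩ v).Nonempty := by
      refine ⟨p₁, hp₁β, ?_⟩
      simp only [v, Set.mem_compl_iff, PrimeSpectrum.mem_zeroLocus,
        Set.singleton_subset_iff]
      exact hp₁e
    obtain ⟨p, hpβ, hpu, hpv⟩ := hβconn.isPreconnected u v hu hv hcover hβu hβv
    simp only [u, v, Set.mem_compl_iff, PrimeSpectrum.mem_zeroLocus,
      Set.singleton_subset_iff] at hpu hpv
    rcases p.isPrime.mem_or_mem (hJle p hpβ heJ) with h | h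
    · exact hpv h
    · exact hpu h
  -- conclude
  rintro x ⟨p, hpβ, rfl⟩
  rw [PrimeSpectrum.mem_zeroLocus]
  intro a ha
  exact hkey p hpβ (hall p hpβ) a ha
end

section
/- Let p be a prime, e ≥ 1, q = pᵉ, let F be the finite field with q elements, and let k be an algebraically closed field equipped with an F-algebra structure. Let A₀ and B₀ be finitely generated F-algebras, let φ₁⁰, φ₂⁰ : A₀ → B₀ be F-algebra homomorphisms, and set A := A₀ ⊗_F k, B := B₀ ⊗_F k, φᵢ := φᵢ⁰ ⊗ id_k : A → B. Let σ : A → A be the ring endomorphism determined by a ⊗ λ ↦ a^q ⊗ λ (the geometric q-Frobenius). Assume: (i) every fiber of the map Spec B → Spec A, p ↦ φ₂⁻¹(p), is a finite set (c₂ is quasi-finite); (ii) r is a positive integer such that for every maximal ideal m ⊆ A one has (√(B·φ₂(m)))^r ⊆ B·φ₂(m) (i.e. ram(c₂) ≤ r). Then for every n ≥ 1 with qⁿ > r, the set V(Jₙ) ⊆ Spec B is finite, where Jₙ ⊆ B is the ideal generated by all elements φ₁(σⁿ(a)) − φ₂(a) for a ∈ A. -/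
open TensorProduct

/-!
Every prime `P ⊇ Jₙ` of `B` is maximal, so `V(Jₙ)` consists of the finitely many minimal primes
of `Jₙ` in the noetherian ring `B`. Let `m ⊇ P` be maximal and `𝔫 = φ₂⁻¹ m`, a closed point by
the Nullstellensatz. The fibre of `φ₂` over `𝔫` is finite, hence (`B` being Jacobson) consists of
closed points, so some `y ∉ m` satisfies `m y ⊆ √(B φ₂(𝔫))`. As `σⁿ a` is a `qⁿ`-th power
(`k` is perfect), `B φ₂(𝔫) ⊆ m^{qⁿ} + Jₙ`, and the ramification bound gives
`(m y)^r ⊆ m^{qⁿ} + P`. In the noetherian local domain `(B/P)_m` this reads `M^r ⊆ M^{r+1}`,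
so `M = 0` by Nakayama, i.e. `m = P`.
-/

namespace Ideal

variable {R : Type*} [CommRing R]

theorem IsPrime.isMaximal_of_finite_primes_le [IsJacobsonRing R] {P : Ideal R} (hP : P.IsPrime)
    (hfin : {Q : Ideal R | Q.IsPrime ∧ P ≤ Q}.Finite) : P.IsMaximal := by
  have hmax : {Q : Ideal R | P ≤ Q ∧ Q.IsMaximal}.Finite :=
    hfin.subset fun Q hQ => ⟨hQ.2.isPrime, hQ.1⟩
  have hP_eq : hmax.toFinset.inf id = P := by
    rw [Finset.inf_id_eq_sInf, Set.Finite.coe_toFinset, ← jacobson,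
      IsJacobsonRing.out ‹_› hP.isRadical]
  obtain ⟨Q, hQ, hQP⟩ := (hP.inf_le' (s := hmax.toFinset) (f := id)).1 hP_eq.le
  rw [Set.Finite.mem_toFinset] at hQ
  exact le_antisymm hQ.1 hQP ▸ hQ.2

theorem exists_notMem_mul_span_le_radical {I : Ideal R} (m : Ideal R) [m.IsMaximal]
    (hfin : {Q : Ideal R | Q.IsPrime ∧ I ≤ Q}.Finite)
    (hmax : ∀ Q : Ideal R, Q.IsPrime → I ≤ Q → Q.IsMaximal) :
    ∃ y ∉ m, m * span {y} ≤ I.radical := by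
  let T := hfin.toFinset.erase m
  have hT : ¬ T.inf id ≤ m := by
    rw [IsPrime.inf_le' inferInstance]
    rintro ⟨Q, hQ, hQm⟩
    rw [Finset.mem_erase, Set.Finite.mem_toFinset] at hQ
    exact hQ.1 ((hmax Q hQ.2.1 hQ.2.2).eq_of_le IsPrime.ne_top' hQm)
  obtain ⟨y, hyT, hym⟩ := SetLike.not_le_iff_exists.1 hT
  refine ⟨y, hym, ?_⟩
  rw [radical_eq_sInf, le_sInf_iff]
  rintro Q ⟨hIQ, hQ⟩
  by_cases hQm : Q = m
  · exact hQm ▸ Ideal.mul_le_left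
  · refine Ideal.mul_le_right.trans ((span_singleton_le_iff_mem _).2 ?_)
    exact Finset.inf_le (f := id) (by simp [T, hQm, hQ, hIQ] : Q ∈ T) hyT

theorem eq_bot_of_mul_span_pow_le_pow [IsDomain R] [IsNoetherianRing R] {N : Ideal R} [N.IsPrime]
    {y : R} (hy : y ∉ N) {r s : ℕ} (hrs : r < s) (h : (N * span {y}) ^ r ≤ N ^ s) : N = ⊥ := by
  let L := Localization.AtPrime N
  let M := IsLocalRing.maximalIdeal L
  have hNM : N.map (algebraMap R L) = M := Localization.AtPrime.map_eq_maximalIdeal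
  have hyL : span {algebraMap R L y} = ⊤ :=
    span_singleton_eq_top.2 (IsLocalization.map_units L (⟨y, hy⟩ : N.primeCompl))
  have hle : M ^ r ≤ M • M ^ r := by
    have := map_mono (f := algebraMap R L) h
    rw [Ideal.map_pow, Ideal.map_mul, map_span, Set.image_singleton, hNM, hyL, mul_top,
      Ideal.map_pow, hNM] at this
    calc M ^ r ≤ M ^ s := this
      _ ≤ M ^ (r + 1) := pow_le_pow_right hrs
      _ = M • M ^ r := by rw [smul_eq_mul, pow_succ']
  have hMr : M ^ r = ⊥ := Submodule.eq_bot_of_le_smul_of_le_jacobson_bot M _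
    (IsNoetherian.noetherian _) hle (IsLocalRing.maximalIdeal_le_jacobson _)
  have hM : ∀ x ∈ M, x = 0 := fun x hx =>
    eq_zero_of_pow_eq_zero ((mem_bot).1 (hMr ▸ pow_mem_pow hx r))
  refine eq_bot_iff.2 fun x hx => (mem_bot).2 ?_
  refine IsLocalization.injective L N.primeCompl_le_nonZeroDivisors ?_
  exact (hM _ (hNM ▸ mem_map_of_mem _ hx)).trans (map_zero _).symm

theorem le_of_mul_span_pow_le_pow_sup [IsNoetherianRing R] {P m : Ideal R} [P.IsPrime] [m.IsPrime]
    (hPm : P ≤ m) {y : R} (hy : y ∉ m) {r s : ℕ} (hrs : r < s)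
    (h : (m * span {y}) ^ r ≤ m ^ s ⊔ P) : m ≤ P := by
  let π := Quotient.mk P
  have hker : RingHom.ker π ≤ m := mk_ker.le.trans hPm
  have : (m.map π).IsPrime := map_isPrime_of_surjective Quotient.mk_surjective hker
  have hy' : π y ∉ m.map π := by
    rwa [← mem_comap, comap_map_of_surjective' π Quotient.mk_surjective, sup_eq_left.2 hker]
  have h' := map_mono (f := π) h
  rw [Ideal.map_pow, Ideal.map_mul, map_span, Set.image_singleton, map_sup, Ideal.map_pow,
    map_quotient_self, sup_bot_eq] at h'
  rw [← mk_ker (I := P), ← map_eq_bot_iff_le_ker]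
  exact eq_bot_of_mul_span_pow_le_pow hy' hrs h'

end Ideal

theorem PrimeSpectrum.finite_zeroLocus_of_forall_isMaximal {R : Type*} [CommRing R]
    [IsNoetherianRing R] (I : Ideal R) (h : ∀ P : Ideal R, P.IsPrime → I ≤ P → P.IsMaximal) :
    (zeroLocus (I : Set R)).Finite := by
  have hinj : Function.Injective (PrimeSpectrum.asIdeal (R := R)) := @PrimeSpectrum.ext _ _
  refine ((I.finite_minimalPrimes_of_isNoetherianRing R).preimage hinj.injOn).subset
    fun P (hP : I ≤ P.asIdeal) => ?_
  obtain ⟨Q, hQ, hQP⟩ := Ideal.exists_minimalPrimes_le hP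
  show P.asIdeal ∈ I.minimalPrimes
  rwa [← (h Q hQ.1.1 hQ.1.2).eq_of_le P.isPrime.ne_top hQP]

def coincidenceIdeal {A B : Type*} [CommRing B] (f g : A → B) : Ideal B :=
  Ideal.span {b | ∃ a, b = f a - g a}

theorem sub_mem_coincidenceIdeal {A B : Type*} [CommRing B] (f g : A → B) (a : A) :
    f a - g a ∈ coincidenceIdeal f g :=
  Ideal.subset_span ⟨a, rfl⟩

section Coincidence

variable {A B : Type*} [CommRing A] [CommRing B]

theorem map_comap_le_pow_sup_coincidenceIdeal (φ₁ φ₂ : A →+* B) {θ : A → A} {s : ℕ}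
    (hθ : ∀ a, ∃ w, θ a = w ^ s) {m : Ideal B} [hm : m.IsPrime]
    (hJm : coincidenceIdeal (φ₁ ∘ θ) φ₂ ≤ m) :
    (m.comap φ₂).map φ₂ ≤ m ^ s ⊔ coincidenceIdeal (φ₁ ∘ θ) φ₂ := by
  rw [Ideal.map_le_iff_le_comap]
  intro a (ha : φ₂ a ∈ m)
  obtain ⟨w, hw⟩ := hθ a
  have hd := sub_mem_coincidenceIdeal (φ₁ ∘ θ) φ₂ a
  have hw' : φ₁ w ∈ m := by
    refine hm.mem_of_pow_mem s ?_
    rw [← map_pow, ← hw]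
    simpa using m.add_mem (hJm hd) ha
  rw [Ideal.mem_comap, show φ₂ a = φ₁ w ^ s - (φ₁ (θ a) - φ₂ a) by rw [hw, map_pow]; ring]
  exact sub_mem (Ideal.mem_sup_left (Ideal.pow_mem_pow hw' s)) (Ideal.mem_sup_right hd)

theorem Ideal.comap_eq_of_map_le {φ : A →+* B} {𝔫 : Ideal A} [h𝔫 : 𝔫.IsMaximal] {Q : Ideal B}
    [Q.IsPrime] (h : 𝔫.map φ ≤ Q) : Q.comap φ = 𝔫 :=
  (h𝔫.eq_of_le (comap_ne_top φ IsPrime.ne_top') (map_le_iff_le_comap.1 h)).symm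

theorem Ideal.finite_setOf_isPrime_map_le (φ : A →+* B) (𝔫 : Ideal A) [𝔫.IsMaximal]
    (hfin : (PrimeSpectrum.comap φ ⁻¹' {⟨𝔫, inferInstance⟩}).Finite) :
    {Q : Ideal B | Q.IsPrime ∧ 𝔫.map φ ≤ Q}.Finite :=
  (hfin.image PrimeSpectrum.asIdeal).subset fun Q ⟨hQ, hle⟩ =>
    ⟨⟨Q, hQ⟩, PrimeSpectrum.ext (comap_eq_of_map_le hle), rfl⟩

theorem isMaximal_of_coincidenceIdeal_le [IsNoetherianRing B] [IsJacobsonRing B]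
    (φ₁ φ₂ : A →+* B) {θ : A → A} {s : ℕ} (hθ : ∀ a, ∃ w, θ a = w ^ s)
    (hqf : ∀ P : PrimeSpectrum A, (PrimeSpectrum.comap φ₂ ⁻¹' {P}).Finite)
    (hmax : ∀ m : Ideal B, m.IsMaximal → (m.comap φ₂).IsMaximal) {r : ℕ}
    (hram : ∀ 𝔫 : Ideal A, 𝔫.IsMaximal → (𝔫.map φ₂).radical ^ r ≤ 𝔫.map φ₂) (hrs : r < s)
    {P : Ideal B} [P.IsPrime] (hP : coincidenceIdeal (φ₁ ∘ θ) φ₂ ≤ P) : P.IsMaximal := by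
  obtain ⟨m, hm, hPm⟩ := Ideal.exists_le_maximal P Ideal.IsPrime.ne_top'
  have h𝔫 := hmax m hm
  set 𝔫 := m.comap φ₂
  have hfin := Ideal.finite_setOf_isPrime_map_le φ₂ 𝔫 (hqf _)
  have hfiber : ∀ Q : Ideal B, Q.IsPrime → 𝔫.map φ₂ ≤ Q → Q.IsMaximal := fun Q hQ hle =>
    hQ.isMaximal_of_finite_primes_le (hfin.subset fun Q' ⟨hQ', hQQ'⟩ => ⟨hQ', hle.trans hQQ'⟩)
  obtain ⟨y, hym, hy⟩ := Ideal.exists_notMem_mul_span_le_radical m hfin hfiber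
  have key : (m * Ideal.span {y}) ^ r ≤ m ^ s ⊔ P := calc
    (m * Ideal.span {y}) ^ r ≤ (𝔫.map φ₂).radical ^ r := Ideal.pow_right_mono hy r
    _ ≤ 𝔫.map φ₂ := hram 𝔫 h𝔫
    _ ≤ m ^ s ⊔ coincidenceIdeal (φ₁ ∘ θ) φ₂ :=
      map_comap_le_pow_sup_coincidenceIdeal φ₁ φ₂ hθ (hP.trans hPm)
    _ ≤ m ^ s ⊔ P := sup_le_sup_left hP _
  exact le_antisymm hPm (Ideal.le_of_mul_span_pow_le_pow_sup hPm hym hrs key) ▸ hm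

end Coincidence

theorem exists_iterate_eq_pow_pow {R : Type*} [CommSemiring R] (σ : R →+* R) {q : ℕ}
    (h : ∀ a, ∃ w, σ a = w ^ q) (n : ℕ) (a : R) : ∃ w, σ^[n] a = w ^ q ^ n := by
  induction n generalizing a with
  | zero => exact ⟨a, by simp⟩
  | succ n ih =>
    obtain ⟨w, hw⟩ := ih a
    obtain ⟨v, hv⟩ := h w
    exact ⟨v, by rw [Function.iterate_succ_apply', hw, map_pow, hv, ← pow_mul, pow_succ']⟩

section BaseChange

variable {F k : Type*} [Field F] [Field k] [Algebra F k]

theorem exists_eq_pow_card_of_tmul [Fintype F] [IsAlgClosed k] {A₀ : Type*} [CommRing A₀]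
    [Algebra F A₀] (σ : A₀ ⊗[F] k →+* A₀ ⊗[F] k)
    (hσ : ∀ (a : A₀) (lam : k), σ (a ⊗ₜ[F] lam) = (a ^ Fintype.card F) ⊗ₜ[F] lam)
    (x : A₀ ⊗[F] k) : ∃ w, σ x = w ^ Fintype.card F := by
  induction x using TensorProduct.induction_on with
  | zero => exact ⟨0, by rw [map_zero, zero_pow (Fintype.card_ne_zero (α := F))]⟩
  | tmul a lam =>
    obtain ⟨μ, hμ⟩ := IsAlgClosed.exists_pow_nat_eq lam (Fintype.card_pos (α := F))
    exact ⟨a ⊗ₜ μ, by rw [hσ, Algebra.TensorProduct.tmul_pow, hμ]⟩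
  | add x y hx hy =>
    obtain ⟨w, hw⟩ := hx
    obtain ⟨v, hv⟩ := hy
    refine ⟨w + v, ?_⟩
    rw [map_add, hw, hv]
    exact (map_add (FiniteField.frobeniusAlgHom F _) w v).symm

theorem IsAlgClosed.algebraMap_quotient_surjective [IsAlgClosed k] {B : Type*} [CommRing B]
    [Algebra k B] [Algebra.FiniteType k B] (m : Ideal B) [m.IsMaximal] :
    Function.Surjective (algebraMap k (B ⧸ m)) :=
  letI := Ideal.Quotient.field m
  haveI := finite_of_finite_type_of_isJacobsonRing k (B ⧸ m)
  IsAlgClosed.algebraMap_bijective_of_isIntegral.2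

theorem Ideal.comap_isMaximal_of_surjective_quotient {A B : Type*} [CommRing A] [CommRing B]
    (f : A →+* B) {m : Ideal B} [m.IsMaximal] (h : Function.Surjective ((Quotient.mk m).comp f)) :
    (m.comap f).IsMaximal := by
  let := Quotient.field m
  have := RingHom.ker_isMaximal_of_surjective _ h
  rwa [← RingHom.comap_ker, mk_ker] at this

variable (k) {B₀ : Type*} [CommRing B₀] [Algebra F B₀] [Algebra.FiniteType F B₀]

attribute [local instance] Algebra.TensorProduct.rightAlgebra

theorem Algebra.TensorProduct.finiteType_rightAlgebra : Algebra.FiniteType k (B₀ ⊗[F] k) :=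
  let e : k ⊗[F] B₀ ≃ₐ[k] B₀ ⊗[F] k :=
    AlgEquiv.ofRingEquiv (f := (Algebra.TensorProduct.comm F k B₀).toRingEquiv) fun c => by
      simp [Algebra.TensorProduct.algebraMap_apply, Algebra.TensorProduct.right_algebraMap_apply]
  Algebra.FiniteType.of_surjective e.toAlgHom e.surjective

theorem isNoetherianRing_tensorProduct_right : IsNoetherianRing (B₀ ⊗[F] k) := by
  have := Algebra.TensorProduct.finiteType_rightAlgebra (F := F) k (B₀ := B₀)
  exact Algebra.FiniteType.isNoetherianRing k _

theorem isJacobsonRing_tensorProduct_right : IsJacobsonRing (B₀ ⊗[F] k) := by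
  have := Algebra.TensorProduct.finiteType_rightAlgebra (F := F) k (B₀ := B₀)
  exact isJacobsonRing_of_finiteType (A := k)

theorem comap_isMaximal_tensorProduct_map [IsAlgClosed k] {A₀ : Type*} [CommRing A₀]
    [Algebra F A₀] (ψ : A₀ →ₐ[F] B₀) (m : Ideal (B₀ ⊗[F] k)) [m.IsMaximal] :
    (m.comap (Algebra.TensorProduct.map ψ (AlgHom.id F k)).toRingHom).IsMaximal := by
  have := Algebra.TensorProduct.finiteType_rightAlgebra (F := F) k (B₀ := B₀)
  refine Ideal.comap_isMaximal_of_surjective_quotient _ fun z => ?_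
  obtain ⟨c, rfl⟩ := IsAlgClosed.algebraMap_quotient_surjective (k := k) m z
  exact ⟨1 ⊗ₜ c, congrArg (Ideal.Quotient.mk m)
    (by simp [Algebra.TensorProduct.right_algebraMap_apply])⟩

end BaseChange

theorem stmt10_general (q : ℕ)
    (F : Type*) [Field F] [Fintype F] (hcard : Fintype.card F = q)
    (k : Type*) [Field k] [IsAlgClosed k] [Algebra F k]
    (A₀ B₀ : Type*) [CommRing A₀] [CommRing B₀] [Algebra F A₀] [Algebra F B₀]
    (hB₀ : Algebra.FiniteType F B₀)
    (ψ₂ : A₀ →ₐ[F] B₀)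
    (φ₁ φ₂ : (A₀ ⊗[F] k) →+* (B₀ ⊗[F] k))
    (hφ₂ : φ₂ = (Algebra.TensorProduct.map ψ₂ (AlgHom.id F k)).toRingHom)
    (σ : (A₀ ⊗[F] k) →+* (A₀ ⊗[F] k))
    (hσ : ∀ (a : A₀) (lam : k), σ (a ⊗ₜ[F] lam) = (a ^ q) ⊗ₜ[F] lam)
    (hqf : ∀ P : PrimeSpectrum (A₀ ⊗[F] k),
      (PrimeSpectrum.comap φ₂ ⁻¹' {P}).Finite)
    (r : ℕ)
    (hram : ∀ m : Ideal (A₀ ⊗[F] k), m.IsMaximal →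
      (Ideal.map φ₂ m).radical ^ r ≤ Ideal.map φ₂ m) :
    ∀ n : ℕ, 1 ≤ n → r < q ^ n →
      (PrimeSpectrum.zeroLocus
        ((Ideal.span {b : B₀ ⊗[F] k | ∃ a : A₀ ⊗[F] k,
            b = φ₁ ((⇑σ)^[n] a) - φ₂ a} : Ideal (B₀ ⊗[F] k)) : Set (B₀ ⊗[F] k))).Finite := by
  intro n _ hrn
  subst hcard hφ₂
  have := isNoetherianRing_tensorProduct_right (F := F) k (B₀ := B₀)
  have := isJacobsonRing_tensorProduct_right (F := F) k (B₀ := B₀)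
  refine PrimeSpectrum.finite_zeroLocus_of_forall_isMaximal _ fun P _ hP =>
    isMaximal_of_coincidenceIdeal_le φ₁ _ ?_ hqf ?_ hram hrn (θ := (⇑σ)^[n]) hP
  · exact exists_iterate_eq_pow_pow σ (exists_eq_pow_card_of_tmul σ hσ) n
  · exact fun m _ => comap_isMaximal_tensorProduct_map k ψ₂ m

/-- (Affine case of the geometric part of Deligne's conjecture.)
For an affine correspondence `φ₁, φ₂ : A → B` defined over `F = F_q` (base-changed to an
algebraically closed field `k`), with `φ₂` quasi-finite of ramification degree `≤ r`,
twisting `φ₁` by the `n`-th power of the geometric `q`-Frobenius `σ` with `qⁿ > r` makes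
the fixed-point locus `V(Jₙ)` finite. -/
theorem stmt10 (p e q : ℕ) (hp : p.Prime) (he : 1 ≤ e) (hq : q = p ^ e)
    (F : Type*) [Field F] [Fintype F] (hcard : Fintype.card F = q)
    (k : Type*) [Field k] [IsAlgClosed k] [Algebra F k]
    (A₀ B₀ : Type*) [CommRing A₀] [CommRing B₀] [Algebra F A₀] [Algebra F B₀]
    (hA₀ : Algebra.FiniteType F A₀) (hB₀ : Algebra.FiniteType F B₀)
    (ψ₁ ψ₂ : A₀ →ₐ[F] B₀)
    (φ₁ φ₂ : (A₀ ⊗[F] k) →+* (B₀ ⊗[F] k))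
    (hφ₁ : φ₁ = (Algebra.TensorProduct.map ψ₁ (AlgHom.id F k)).toRingHom)
    (hφ₂ : φ₂ = (Algebra.TensorProduct.map ψ₂ (AlgHom.id F k)).toRingHom)
    (σ : (A₀ ⊗[F] k) →+* (A₀ ⊗[F] k))
    (hσ : ∀ (a : A₀) (lam : k), σ (a ⊗ₜ[F] lam) = (a ^ q) ⊗ₜ[F] lam)
    (hqf : ∀ P : PrimeSpectrum (A₀ ⊗[F] k),
      (PrimeSpectrum.comap φ₂ ⁻¹' {P}).Finite)
    (r : ℕ) (hr : 0 < r)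
    (hram : ∀ m : Ideal (A₀ ⊗[F] k), m.IsMaximal →
      (Ideal.map φ₂ m).radical ^ r ≤ Ideal.map φ₂ m) :
    ∀ n : ℕ, 1 ≤ n → r < q ^ n →
      (PrimeSpectrum.zeroLocus
        ((Ideal.span {b : B₀ ⊗[F] k | ∃ a : A₀ ⊗[F] k,
            b = φ₁ ((⇑σ)^[n] a) - φ₂ a} : Ideal (B₀ ⊗[F] k)) : Set (B₀ ⊗[F] k))).Finite :=
  stmt10_general q F hcard k A₀ B₀ hB₀ ψ₂ φ₁ φ₂ hφ₂ σ hσ hqf r hram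
end
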